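/- arXiv:1503.01335 — 2 statements merged into one kernel-verified Lean document; each statement's English description precedes it below -/
import Mathlib

section
/- Assume γ₂ > 0, γ₁ ≠ γ₂, and let Λ₁(t) denote the largest real root of φ(t,·). Then, for all sufficiently large t: if γ₁ < γ₂ the stagnation condition for the layer adjacent to the surface holds, Λ₁(t)·(Λ₁(t) − γ₂d₂) ≤ 0; and if γ₁ > γ₂ the stagnation condition for the bottom layer holds, (Λ₁(t) − γ₂d₂)·(Λ₁(t) − γ₁d₁ − γ₂d₂) ≤ 0. -/
open Real Filter Asymptotics

/-- The coefficient `A(t)` of the dispersion cubic. -/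
noncomputable def funA (d₁ d₂ γ₁ γ₂ t : ℝ) : ℝ :=
  -(1 / t) * (γ₂ * (t * d₂ + Real.sinh (t * d₂) * Real.cosh (t * d₁) / Real.cosh (t * (d₁ + d₂)))
    + γ₁ * Real.sinh (t * d₁) * Real.cosh (t * d₂) / Real.cosh (t * (d₁ + d₂)))

/-- The coefficient `B(t)` of the dispersion cubic. -/
noncomputable def funB (d₁ d₂ g γ₁ γ₂ t : ℝ) : ℝ :=
  Real.tanh (t * (d₁ + d₂)) * ((γ₂ ^ 2 * d₂ - g) / t
    + γ₂ * (γ₁ - γ₂) * Real.sinh (t * d₁) * Real.sinh (t * d₂) /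
        (t ^ 2 * Real.sinh (t * (d₁ + d₂))))

/-- The coefficient `C(t)` of the dispersion cubic. -/
noncomputable def funC (d₁ d₂ g γ₁ γ₂ t : ℝ) : ℝ :=
  (g * Real.tanh (t * (d₁ + d₂)) / t ^ 2) *
    ((γ₁ - γ₂) * Real.sinh (t * d₁) * Real.sinh (t * d₂) / Real.sinh (t * (d₁ + d₂))
      + γ₂ * d₂ * t)

/-- The dispersion cubic `φ(t,Λ)`. -/
noncomputable def phi (d₁ d₂ g γ₁ γ₂ t Λ : ℝ) : ℝ :=
  Λ ^ 3 + funA d₁ d₂ γ₁ γ₂ t * Λ ^ 2 + funB d₁ d₂ g γ₁ γ₂ t * Λ + funC d₁ d₂ g γ₁ γ₂ t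

/-!
As `t → ∞`, each coefficient differs from its limit by `t⁻¹` times a bounded hyperbolic ratio, so
`A(t) → -γ₂d₂` and `B(t), C(t) → 0`. Hence `φ(t,Λ) → Λ²(Λ - γ₂d₂)` pointwise, and `φ(t,·)` is
eventually strictly increasing on `[γ₂d₂, ∞)`. At `Λ = γ₂d₂` there is the exact formula
`t² cosh(td) φ(t,γ₂d₂) = (γ₂ - γ₁) sinh(td₁) (γ₂²d₂² t cosh(td₂) - (γ₂²d₂ + g) sinh(td₂))`,
whose sign is eventually that of `γ₂ - γ₁`. So if `γ₁ < γ₂`, then `φ(t,·)` is negative at `γ₂d₂/2`,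
positive at `γ₂d₂` and increasing beyond, which traps `Λ₁(t)` in `[γ₂d₂/2, γ₂d₂]`; if `γ₁ > γ₂`,
the same happens on `[γ₂d₂, γ₁d₁ + γ₂d₂]`, since `φ(t, γ₁d₁ + γ₂d₂) → (γ₁d₁ + γ₂d₂)² γ₁d₁ > 0`.
-/

open Set Topology

lemma abs_sinh_mul_cosh_div_cosh_add_le_one {a b : ℝ} (ha : 0 ≤ a) (hb : 0 ≤ b) :
    |sinh a * cosh b / cosh (a + b)| ≤ 1 := by
  have hsa : 0 ≤ sinh a := sinh_nonneg_iff.2 ha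
  have hsb : 0 ≤ sinh b := sinh_nonneg_iff.2 hb
  rw [abs_of_nonneg (by positivity), cosh_add]
  refine div_le_one_of_le₀ ?_ (by positivity)
  nlinarith [sinh_lt_cosh a, cosh_pos b]

lemma abs_sinh_mul_sinh_div_sinh_add_le_one {a b : ℝ} (ha : 0 ≤ a) (hb : 0 ≤ b) :
    |sinh a * sinh b / sinh (a + b)| ≤ 1 := by
  have hsa : 0 ≤ sinh a := sinh_nonneg_iff.2 ha
  have hsb : 0 ≤ sinh b := sinh_nonneg_iff.2 hb
  have hsab : 0 ≤ sinh (a + b) := sinh_nonneg_iff.2 (add_nonneg ha hb)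
  rw [abs_of_nonneg (by positivity)]
  refine div_le_one_of_le₀ ?_ hsab
  rw [sinh_add]
  nlinarith [sinh_lt_cosh b, cosh_pos a]

lemma eventually_mul_sinh_lt_mul_cosh (K d : ℝ) {c : ℝ} (hc : 0 < c) :
    ∀ᶠ t in atTop, K * sinh (t * d) < c * t * cosh (t * d) := by
  filter_upwards [eventually_gt_atTop (|K| / c)] with t ht
  have hKt : |K| < c * t := by rwa [div_lt_iff₀' hc] at ht
  calc K * sinh (t * d) ≤ |K| * cosh (t * d) := by
        rcases abs_cases K with ⟨hK, -⟩ | ⟨hK, -⟩ <;> rw [hK] <;>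
          nlinarith [sinh_lt_cosh (t * d), sinh_lt_cosh (-(t * d)), sinh_neg (t * d),
            cosh_neg (t * d), abs_nonneg K]
    _ < c * t * cosh (t * d) := mul_lt_mul_of_pos_right hKt (cosh_pos _)

lemma tendsto_of_eventually_eq_add_inv_mul {f g : ℝ → ℝ} {c : ℝ}
    (hg : g =O[atTop] fun _ ↦ (1 : ℝ)) (hfg : ∀ᶠ t in atTop, f t = c + t⁻¹ * g t) :
    Tendsto f atTop (𝓝 c) := by
  have h : Tendsto (fun t ↦ t⁻¹ * g t) atTop (𝓝 0) :=
    ((isBigO_refl (fun t : ℝ ↦ t⁻¹) atTop).mul hg).trans_tendsto (by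
      simpa using tendsto_inv_atTop_zero)
  simpa using (h.const_add c).congr' (hfg.mono fun t ht ↦ ht.symm)

lemma strictMonoOn_cubic {a b c m : ℝ} (hm : 0 ≤ m) (ha : -(5 / 4 * m) ≤ a)
    (hb : -(m ^ 2 / 2) < b) :
    StrictMonoOn (fun x ↦ x ^ 3 + a * x ^ 2 + b * x + c) (Ici m) := by
  intro x hx y hy hxy
  have hq : 0 < x ^ 2 + x * y + y ^ 2 + a * (x + y) + b := by
    simp only [mem_Ici] at hx hy
    nlinarith [mul_le_mul_of_nonneg_right ha (by linarith : 0 ≤ x + y), sq_nonneg (x - y),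
      mul_nonneg (sub_nonneg.2 hx) (sub_nonneg.2 hy)]
  have hfactor : (y ^ 3 + a * y ^ 2 + b * y + c) - (x ^ 3 + a * x ^ 2 + b * x + c)
      = (y - x) * (x ^ 2 + x * y + y ^ 2 + a * (x + y) + b) := by ring
  dsimp only
  linarith [mul_pos (sub_pos.2 hxy) hq]

lemma IsGreatest.mem_Icc_of_strictMonoOn {f : ℝ → ℝ} {a b r : ℝ}
    (hr : IsGreatest {x | f x = 0} r) (hf : Continuous f) (hab : a ≤ b) (hfa : f a ≤ 0)
    (hfb : 0 ≤ f b) (hmono : StrictMonoOn f (Ici b)) : r ∈ Icc a b := by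
  obtain ⟨c, hc, hfc⟩ := intermediate_value_Icc hab hf.continuousOn ⟨hfa, hfb⟩
  refine ⟨hc.1.trans (hr.2 hfc), le_of_not_gt fun hbr ↦ ?_⟩
  have hfbr : f b < f r := hmono self_mem_Ici hbr.le hbr
  exact (hfb.trans_lt hfbr).ne' hr.1

section DispersionCubic

variable {d₁ d₂ : ℝ}

lemma isBigO_one_sinh_mul_cosh_div_cosh (hd₁ : 0 ≤ d₁) (hd₂ : 0 ≤ d₂) :
    (fun t ↦ sinh (t * d₁) * cosh (t * d₂) / cosh (t * (d₁ + d₂))) =O[atTop]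
      fun _ ↦ (1 : ℝ) :=
  IsBigO.of_bound 1 <| (eventually_ge_atTop 0).mono fun t ht ↦ by
    simpa only [norm_eq_abs, norm_one, mul_one, mul_add] using
      abs_sinh_mul_cosh_div_cosh_add_le_one (mul_nonneg ht hd₁) (mul_nonneg ht hd₂)

lemma isBigO_one_sinh_mul_sinh_div_sinh (hd₁ : 0 ≤ d₁) (hd₂ : 0 ≤ d₂) :
    (fun t ↦ sinh (t * d₁) * sinh (t * d₂) / sinh (t * (d₁ + d₂))) =O[atTop]
      fun _ ↦ (1 : ℝ) :=
  IsBigO.of_bound 1 <| (eventually_ge_atTop 0).mono fun t ht ↦ by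
    simpa only [norm_eq_abs, norm_one, mul_one, mul_add] using
      abs_sinh_mul_sinh_div_sinh_add_le_one (mul_nonneg ht hd₁) (mul_nonneg ht hd₂)

lemma isBigO_one_tanh (d : ℝ) : (fun t ↦ tanh (t * d)) =O[atTop] fun _ ↦ (1 : ℝ) :=
  IsBigO.of_bound 1 <| Eventually.of_forall fun t ↦ by simpa using (abs_tanh_lt_one _).le

variable (g γ₁ γ₂ : ℝ)

lemma tendsto_funA (hd₁ : 0 ≤ d₁) (hd₂ : 0 ≤ d₂) :
    Tendsto (funA d₁ d₂ γ₁ γ₂) atTop (𝓝 (-(γ₂ * d₂))) := by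
  refine tendsto_of_eventually_eq_add_inv_mul
    (((isBigO_one_sinh_mul_cosh_div_cosh hd₂ hd₁).const_mul_left γ₂).add
      ((isBigO_one_sinh_mul_cosh_div_cosh hd₁ hd₂).const_mul_left γ₁)).neg_left ?_
  filter_upwards [eventually_ne_atTop 0] with t ht
  rw [funA, add_comm d₂ d₁]
  field_simp
  ring

lemma isBigO_one_inv_mul_sinh_mul_sinh_div_sinh (hd₁ : 0 ≤ d₁) (hd₂ : 0 ≤ d₂) :
    (fun t ↦ t⁻¹ * (sinh (t * d₁) * sinh (t * d₂) / sinh (t * (d₁ + d₂)))) =O[atTop]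
      fun _ ↦ (1 : ℝ) := by
  simpa only [mul_one] using
    (tendsto_inv_atTop_zero.isBigO_one ℝ).mul (isBigO_one_sinh_mul_sinh_div_sinh hd₁ hd₂)

lemma tendsto_funB (hd₁ : 0 ≤ d₁) (hd₂ : 0 ≤ d₂) :
    Tendsto (funB d₁ d₂ g γ₁ γ₂) atTop (𝓝 0) := by
  refine tendsto_of_eventually_eq_add_inv_mul (by
    simpa only [mul_one] using (isBigO_one_tanh (d₁ + d₂)).mul
      ((isBigO_const_one ℝ (γ₂ ^ 2 * d₂ - g) atTop).add
        ((isBigO_one_inv_mul_sinh_mul_sinh_div_sinh hd₁ hd₂).const_mul_left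
          (γ₂ * (γ₁ - γ₂))))) ?_
  filter_upwards [eventually_ne_atTop 0] with t ht
  rw [funB]
  field_simp
  ring

lemma tendsto_funC (hd₁ : 0 ≤ d₁) (hd₂ : 0 ≤ d₂) :
    Tendsto (funC d₁ d₂ g γ₁ γ₂) atTop (𝓝 0) := by
  refine tendsto_of_eventually_eq_add_inv_mul (by
    simpa only [mul_one] using ((isBigO_one_tanh (d₁ + d₂)).const_mul_left g).mul
      (((isBigO_one_inv_mul_sinh_mul_sinh_div_sinh hd₁ hd₂).const_mul_left (γ₁ - γ₂)).add
        (isBigO_const_one ℝ (γ₂ * d₂) atTop))) ?_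
  filter_upwards [eventually_ne_atTop 0] with t ht
  rw [funC]
  field_simp
  ring

lemma tendsto_phi (hd₁ : 0 ≤ d₁) (hd₂ : 0 ≤ d₂) (Λ : ℝ) :
    Tendsto (fun t ↦ phi d₁ d₂ g γ₁ γ₂ t Λ) atTop (𝓝 (Λ ^ 2 * (Λ - γ₂ * d₂))) := by
  rw [show Λ ^ 2 * (Λ - γ₂ * d₂) = Λ ^ 3 + -(γ₂ * d₂) * Λ ^ 2 + 0 * Λ + 0 by ring]
  exact ((((tendsto_funA γ₁ γ₂ hd₁ hd₂).mul_const (Λ ^ 2)).const_add (Λ ^ 3)).add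
    ((tendsto_funB g γ₁ γ₂ hd₁ hd₂).mul_const Λ)).add (tendsto_funC g γ₁ γ₂ hd₁ hd₂)

lemma continuous_phi (t : ℝ) : Continuous (phi d₁ d₂ g γ₁ γ₂ t) := by
  unfold phi
  fun_prop

lemma eventually_strictMonoOn_phi (hd₁ : 0 ≤ d₁) (hd₂ : 0 ≤ d₂) (hm : 0 < γ₂ * d₂) :
    ∀ᶠ t in atTop, StrictMonoOn (phi d₁ d₂ g γ₁ γ₂ t) (Ici (γ₂ * d₂)) := by
  filter_upwards [(tendsto_funA γ₁ γ₂ hd₁ hd₂).eventually_const_le (u := -(5 / 4 * (γ₂ * d₂)))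
      (by linarith),
    (tendsto_funB g γ₁ γ₂ hd₁ hd₂).eventually_const_lt (u := -((γ₂ * d₂) ^ 2 / 2))
      (by nlinarith)] with t hA hB
  exact strictMonoOn_cubic hm.le hA hB

lemma phi_γ₂_mul_d₂ {t : ℝ} (ht : t ≠ 0) (hd : d₁ + d₂ ≠ 0) :
    phi d₁ d₂ g γ₁ γ₂ t (γ₂ * d₂) = (γ₂ - γ₁) * sinh (t * d₁) *
      ((γ₂ * d₂) ^ 2 * t * cosh (t * d₂) - (γ₂ ^ 2 * d₂ + g) * sinh (t * d₂)) /
        (t ^ 2 * cosh (t * (d₁ + d₂))) := by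
  have hS : sinh (t * (d₁ + d₂)) ≠ 0 := sinh_ne_zero.2 (mul_ne_zero ht hd)
  have hC : cosh (t * (d₁ + d₂)) ≠ 0 := (cosh_pos _).ne'
  have hadd : sinh (t * (d₁ + d₂))
      = sinh (t * d₁) * cosh (t * d₂) + cosh (t * d₁) * sinh (t * d₂) := by
    rw [mul_add, sinh_add]
  unfold phi funA funB funC
  rw [tanh_eq_sinh_div_cosh]
  generalize sinh (t * (d₁ + d₂)) = S at hS hadd ⊢
  generalize cosh (t * (d₁ + d₂)) = C at hC ⊢
  generalize sinh (t * d₁) = s₁ at hadd ⊢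
  generalize sinh (t * d₂) = s₂ at hadd ⊢
  generalize cosh (t * d₁) = c₁ at hadd ⊢
  generalize cosh (t * d₂) = c₂ at hadd ⊢
  field_simp
  subst hadd
  ring

lemma eventually_sub_mul_phi_γ₂_mul_d₂_pos (hd₁ : 0 < d₁) (hd₂ : 0 ≤ d₂) (hm : 0 < γ₂ * d₂)
    (hne : γ₁ ≠ γ₂) :
    ∀ᶠ t in atTop, 0 < (γ₂ - γ₁) * phi d₁ d₂ g γ₁ γ₂ t (γ₂ * d₂) := by
  filter_upwards [eventually_gt_atTop 0,
    eventually_mul_sinh_lt_mul_cosh (γ₂ ^ 2 * d₂ + g) d₂ (pow_pos hm 2)] with t ht hbracket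
  rw [phi_γ₂_mul_d₂ g γ₁ γ₂ ht.ne' (by positivity)]
  have hγ : 0 < (γ₂ - γ₁) ^ 2 := by
    have := sub_ne_zero.2 hne.symm; positivity
  have hs : 0 < sinh (t * d₁) := sinh_pos_iff.2 (mul_pos ht hd₁)
  have hden : 0 < t ^ 2 * cosh (t * (d₁ + d₂)) := by positivity
  exact (div_pos (mul_pos (mul_pos hγ hs) (sub_pos.2 hbracket)) hden).trans_eq (by ring)

end DispersionCubic

theorem largest_root_stagnation_general
    (d₁ d₂ g γ₁ γ₂ : ℝ) (hd₁ : 0 < d₁) (hd₂ : 0 < d₂)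
    (hγ₂ : 0 < γ₂) (Λ₁ : ℝ → ℝ)
    (hΛ₁ : ∀ᶠ t in atTop,
      phi d₁ d₂ g γ₁ γ₂ t (Λ₁ t) = 0 ∧
      ∀ Λ : ℝ, phi d₁ d₂ g γ₁ γ₂ t Λ = 0 → Λ ≤ Λ₁ t) :
    (γ₁ < γ₂ → ∀ᶠ t in atTop, Λ₁ t * (Λ₁ t - γ₂ * d₂) ≤ 0) ∧
    (γ₂ < γ₁ → ∀ᶠ t in atTop,
      (Λ₁ t - γ₂ * d₂) * (Λ₁ t - γ₁ * d₁ - γ₂ * d₂) ≤ 0) := by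
  have hm : 0 < γ₂ * d₂ := mul_pos hγ₂ hd₂
  have hmono_ev := eventually_strictMonoOn_phi g γ₁ γ₂ hd₁.le hd₂.le hm
  constructor
  · intro h
    have hneg : ∀ᶠ t in atTop, phi d₁ d₂ g γ₁ γ₂ t (γ₂ * d₂ / 2) < 0 :=
      (tendsto_phi g γ₁ γ₂ hd₁.le hd₂.le _).eventually_lt_const (by nlinarith [pow_pos hm 3])
    filter_upwards [hΛ₁, hmono_ev, hneg,
      eventually_sub_mul_phi_γ₂_mul_d₂_pos g γ₁ γ₂ hd₁ hd₂.le hm h.ne]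
      with t hroot hmono hneg hsign
    have hpos := pos_of_mul_pos_right hsign (sub_pos.2 h).le
    obtain ⟨hlo, hhi⟩ := IsGreatest.mem_Icc_of_strictMonoOn hroot (continuous_phi g γ₁ γ₂ t)
      (by linarith) hneg.le hpos.le hmono
    exact mul_nonpos_of_nonneg_of_nonpos (by linarith) (sub_nonpos.2 hhi)
  · intro h
    have hγ₁d₁ : 0 < γ₁ * d₁ := mul_pos (hγ₂.trans h) hd₁
    have hM : γ₂ * d₂ ≤ γ₁ * d₁ + γ₂ * d₂ := le_add_of_nonneg_left hγ₁d₁.le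
    have hpos : ∀ᶠ t in atTop, 0 < phi d₁ d₂ g γ₁ γ₂ t (γ₁ * d₁ + γ₂ * d₂) :=
      (tendsto_phi g γ₁ γ₂ hd₁.le hd₂.le _).eventually_const_lt (by
        rw [add_sub_cancel_right]; positivity)
    filter_upwards [hΛ₁, hmono_ev, hpos,
      eventually_sub_mul_phi_γ₂_mul_d₂_pos g γ₁ γ₂ hd₁ hd₂.le hm h.ne']
      with t hroot hmono hpos hsign
    have hneg := neg_of_mul_pos_right hsign (sub_nonpos.2 h.le)
    obtain ⟨hlo, hhi⟩ := IsGreatest.mem_Icc_of_strictMonoOn hroot (continuous_phi g γ₁ γ₂ t)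
      hM hneg.le hpos.le (hmono.mono (Ici_subset_Ici.2 hM))
    exact mul_nonpos_of_nonneg_of_nonpos (sub_nonneg.2 hlo) (by linarith)

/-- for large `t`, the largest root `Λ₁(t)` satisfies the
stagnation condition of the top layer if `γ₁ < γ₂` and of the bottom layer if
`γ₁ > γ₂`. -/
theorem largest_root_stagnation
    (d₁ d₂ g γ₁ γ₂ : ℝ) (hd₁ : 0 < d₁) (hd₂ : 0 < d₂) (hg : 0 < g)
    (hγ₂ : 0 < γ₂) (hne : γ₁ ≠ γ₂) (Λ₁ : ℝ → ℝ)
    (hΛ₁ : ∀ᶠ t in atTop,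
      phi d₁ d₂ g γ₁ γ₂ t (Λ₁ t) = 0 ∧
      ∀ Λ : ℝ, phi d₁ d₂ g γ₁ γ₂ t Λ = 0 → Λ ≤ Λ₁ t) :
    (γ₁ < γ₂ → ∀ᶠ t in atTop, Λ₁ t * (Λ₁ t - γ₂ * d₂) ≤ 0) ∧
    (γ₂ < γ₁ → ∀ᶠ t in atTop,
      (Λ₁ t - γ₂ * d₂) * (Λ₁ t - γ₁ * d₁ - γ₂ * d₂) ≤ 0) :=
  largest_root_stagnation_general d₁ d₂ g γ₁ γ₂ hd₁ hd₂ hγ₂ Λ₁ hΛ₁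
end

section
/- Assume γ₂ = 0 and γ₁ < 0. With p(t) := B(t) − A(t)²/3, q(t) := 2A(t)³/27 − A(t)B(t)/3 + C(t), and discriminant Δ(t) := (p(t)/3)³ + (q(t)/2)², one has t³·Δ(t) → −g³/27 as t → ∞; in particular Δ(t) < 0 for all sufficiently large t, so φ(t,·) has three distinct real roots Λ₃(t) < Λ₂(t) < Λ₁(t) for large t. Moreover there exists t₀ > 0 such that for all t ≥ t₀ one has γ₁d₁ < Λ₃(t) < Λ₂(t) < 0 < Λ₁(t), and Λᵢ(t) → 0 as t → ∞ for i = 1, 2, 3. -/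
open Real Filter Asymptotics

/-- The coefficient `p(t)` of the depressed cubic. -/
noncomputable def funp (d₁ d₂ g γ₁ γ₂ t : ℝ) : ℝ :=
  funB d₁ d₂ g γ₁ γ₂ t - (funA d₁ d₂ γ₁ γ₂ t) ^ 2 / 3

/-- The coefficient `q(t)` of the depressed cubic. -/
noncomputable def funq (d₁ d₂ g γ₁ γ₂ t : ℝ) : ℝ :=
  2 * (funA d₁ d₂ γ₁ γ₂ t) ^ 3 / 27 - funA d₁ d₂ γ₁ γ₂ t * funB d₁ d₂ g γ₁ γ₂ t / 3
    + funC d₁ d₂ g γ₁ γ₂ t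

/-- The discriminant `Δ(t)` of the depressed cubic. -/
noncomputable def disc (d₁ d₂ g γ₁ γ₂ t : ℝ) : ℝ :=
  (funp d₁ d₂ g γ₁ γ₂ t / 3) ^ 3 + (funq d₁ d₂ g γ₁ γ₂ t / 2) ^ 2

/-!
With `γ₂ = 0` one has `t·A → -γ₁/2`, `t·B → -g` and `t²·C → γ₁g/2`, and only the `p³` term
survives in `t³Δ`, giving `(-g/3)³`. For the roots, `C = -A·γ` with `γ = g·tanh(t d₂)/t`, so
`φ = Λ³ + AΛ² - βΛ - Aγ` with `β = g·tanh(t d)/t`, `0 < γ < β` and `A > 0`. Since `A = O(1/t)`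
while `√β ≍ t^(-1/2)`, eventually `2A < 3√β`, and then `φ` changes sign at `-2√β, -√β, 0, 2√β`;
this places the three roots, and all of them are `O(√β) → 0`.
-/

open Topology

namespace Real

lemma tanh_eq_one_sub (x : ℝ) : tanh x = 1 - 2 / (exp (2 * x) + 1) := by
  have h : exp (2 * x) = exp x * exp x := by rw [← exp_add, two_mul]
  rw [tanh_eq, h, exp_neg]
  field_simp
  ring

lemma strictMono_tanh : StrictMono tanh := fun x y hxy => by
  rw [tanh_eq_one_sub, tanh_eq_one_sub]
  gcongr

lemma tanh_pos {x : ℝ} (hx : 0 < x) : 0 < tanh x := by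
  simpa using strictMono_tanh hx

lemma tendsto_tanh_atTop : Tendsto tanh atTop (𝓝 1) := by
  have h : Tendsto (fun x : ℝ => exp (2 * x) + 1) atTop atTop :=
    tendsto_atTop_add_const_right _ _ (tendsto_exp_atTop.comp (tendsto_id.const_mul_atTop two_pos))
  rw [funext tanh_eq_one_sub]
  simpa using (h.const_div_atTop 2).const_sub 1

lemma sinh_mul_cosh_div_cosh_add (x y : ℝ) :
    sinh x * cosh y / cosh (x + y) = tanh x / (1 + tanh x * tanh y) := by
  have := cosh_pos x
  have := cosh_pos y
  rw [cosh_add, tanh_eq_sinh_div_cosh, tanh_eq_sinh_div_cosh]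
  field_simp

end Real

lemma tendsto_tanh_mul_atTop {c : ℝ} (hc : 0 < c) :
    Tendsto (fun t => tanh (t * c)) atTop (𝓝 1) :=
  tendsto_tanh_atTop.comp (tendsto_id.atTop_mul_const hc)

lemma tendsto_pow_three_mul_discriminant {a b c : ℝ → ℝ} {a₀ b₀ c₀ : ℝ}
    (ha : Tendsto (fun t => t * a t) atTop (𝓝 a₀)) (hb : Tendsto (fun t => t * b t) atTop (𝓝 b₀))
    (hc : Tendsto (fun t => t ^ 2 * c t) atTop (𝓝 c₀)) :
    Tendsto (fun t => t ^ 3 * (((b t - a t ^ 2 / 3) / 3) ^ 3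
      + ((2 * a t ^ 3 / 27 - a t * b t / 3 + c t) / 2) ^ 2)) atTop (𝓝 ((b₀ / 3) ^ 3)) := by
  have hu : Tendsto (fun t : ℝ => t⁻¹) atTop (𝓝 0) := tendsto_inv_atTop_zero
  have h := (((hb.sub ((ha.pow 2).mul hu |>.div_const 3)).div_const 3).pow 3).add
    ((((((ha.pow 3).mul hu).const_mul (2 / 27)).sub ((ha.mul hb).div_const 3)).add hc).pow 2
      |>.mul hu |>.div_const 4)
  simp only [mul_zero, zero_div, sub_zero, add_zero] at h
  refine h.congr' ?_
  filter_upwards [eventually_ne_atTop 0] with t ht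
  field_simp
  ring

lemma eventually_const_mul_sq_lt {a b : ℝ → ℝ} {a₀ b₀ : ℝ}
    (ha : Tendsto (fun t => t * a t) atTop (𝓝 a₀)) (hb : Tendsto (fun t => t * b t) atTop (𝓝 b₀))
    (hb₀ : 0 < b₀) (c : ℝ) : ∀ᶠ t in atTop, c * a t ^ 2 < b t := by
  have h := (((ha.pow 2).mul tendsto_inv_atTop_zero).const_mul c).sub hb
  rw [mul_zero, mul_zero, zero_sub] at h
  filter_upwards [h.eventually_lt_const (neg_neg_of_pos hb₀), eventually_gt_atTop 0] with t hlt ht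
  have : t * (c * a t ^ 2 - b t) < 0 := by
    have := ht.ne'
    rwa [show t * (c * a t ^ 2 - b t) = c * ((t * a t) ^ 2 * t⁻¹) - t * b t by field_simp]
  exact sub_neg.1 (neg_of_mul_neg_right this ht.le)

lemma cubic_eq_mul_of_roots {a b c r₁ r₂ r₃ : ℝ} (h₁₂ : r₁ ≠ r₂) (h₁₃ : r₁ ≠ r₃) (h₂₃ : r₂ ≠ r₃)
    (h₁ : r₁ ^ 3 + a * r₁ ^ 2 + b * r₁ + c = 0) (h₂ : r₂ ^ 3 + a * r₂ ^ 2 + b * r₂ + c = 0)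
    (h₃ : r₃ ^ 3 + a * r₃ ^ 2 + b * r₃ + c = 0) (x : ℝ) :
    x ^ 3 + a * x ^ 2 + b * x + c = (x - r₁) * (x - r₂) * (x - r₃) := by
  have e₁₂ : r₁ ^ 2 + r₁ * r₂ + r₂ ^ 2 + a * (r₁ + r₂) + b = 0 :=
    (mul_right_inj' (sub_ne_zero.2 h₁₂)).1 (by linear_combination h₁ - h₂)
  have e₁₃ : r₁ ^ 2 + r₁ * r₃ + r₃ ^ 2 + a * (r₁ + r₃) + b = 0 :=
    (mul_right_inj' (sub_ne_zero.2 h₁₃)).1 (by linear_combination h₁ - h₃)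
  have ha : a = -(r₁ + r₂ + r₃) :=
    (mul_right_inj' (sub_ne_zero.2 h₂₃)).1 (by linear_combination e₁₂ - e₁₃)
  have hb : b = r₁ * r₂ + r₁ * r₃ + r₂ * r₃ := by linear_combination e₁₂ - (r₁ + r₂) * ha
  linear_combination h₁ + (x ^ 2 - r₁ ^ 2) * ha + (x - r₁) * hb

lemma exists_three_roots_cubic {A β γ : ℝ} (hA : 0 < A) (hγ : 0 < γ) (hγβ : γ < β)
    (hAβ : 4 * A ^ 2 < 9 * β) :
    ∃ Λ₁ Λ₂ Λ₃ : ℝ, -(2 * √β) < Λ₃ ∧ Λ₃ < Λ₂ ∧ Λ₂ < 0 ∧ 0 < Λ₁ ∧ Λ₁ < 2 * √β ∧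
      ∀ x, x ^ 3 + A * x ^ 2 - β * x - A * γ = (x - Λ₁) * (x - Λ₂) * (x - Λ₃) := by
  set s := √β
  have hs : 0 < s := sqrt_pos.2 (hγ.trans hγβ)
  have hs2 : s ^ 2 = β := sq_sqrt (hγ.trans hγβ).le
  have h2A : 2 * A < 3 * s := by nlinarith
  set f : ℝ → ℝ := fun x => x ^ 3 + A * x ^ 2 - β * x - A * γ
  have hf : Continuous f := by fun_prop
  have v₁ : f (-(2 * s)) < 0 := by nlinarith
  have v₂ : 0 < f (-s) := by nlinarith
  have v₃ : f 0 < 0 := by nlinarith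
  have v₄ : 0 < f (2 * s) := by nlinarith
  obtain ⟨Λ₃, ⟨h₃l, h₃r⟩, hΛ₃⟩ :=
    intermediate_value_Ioo (by linarith) hf.continuousOn ⟨v₁, v₂⟩
  obtain ⟨Λ₂, ⟨h₂l, h₂r⟩, hΛ₂⟩ :=
    intermediate_value_Ioo' (by linarith) hf.continuousOn ⟨v₃, v₂⟩
  obtain ⟨Λ₁, ⟨h₁l, h₁r⟩, hΛ₁⟩ :=
    intermediate_value_Ioo (by linarith) hf.continuousOn ⟨v₃, v₄⟩
  refine ⟨Λ₁, Λ₂, Λ₃, h₃l, by linarith, h₂r, h₁l, h₁r, fun x => ?_⟩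
  have key := cubic_eq_mul_of_roots (a := A) (b := -β) (c := -(A * γ))
    (r₁ := Λ₁) (r₂ := Λ₂) (r₃ := Λ₃) (by linarith)
    (by linarith) (by linarith) (by linear_combination hΛ₁) (by linear_combination hΛ₂)
    (by linear_combination hΛ₃) x
  linear_combination key

section GammaTwoZero

variable {d₁ d₂ g γ₁ t : ℝ}

lemma funA_gamma2_zero :
    funA d₁ d₂ γ₁ 0 t = -γ₁ / t * (tanh (t * d₁) / (1 + tanh (t * d₁) * tanh (t * d₂))) := by
  rw [funA, mul_add t d₁ d₂, ← sinh_mul_cosh_div_cosh_add]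
  ring

lemma funB_gamma2_zero : funB d₁ d₂ g γ₁ 0 t = -(g * tanh (t * (d₁ + d₂)) / t) := by
  simp only [funB]
  ring

lemma funC_gamma2_zero (ht : t ≠ 0) (hd : d₁ + d₂ ≠ 0) :
    funC d₁ d₂ g γ₁ 0 t = -(funA d₁ d₂ γ₁ 0 t * (g * tanh (t * d₂) / t)) := by
  have := sinh_ne_zero.2 (mul_ne_zero ht hd)
  have := cosh_pos (t * (d₁ + d₂))
  have := cosh_pos (t * d₂)
  simp only [funA, funC, tanh_eq_sinh_div_cosh]
  field_simp
  ring

lemma phi_gamma2_zero (ht : t ≠ 0) (hd : d₁ + d₂ ≠ 0) (x : ℝ) :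
    phi d₁ d₂ g γ₁ 0 t x = x ^ 3 + funA d₁ d₂ γ₁ 0 t * x ^ 2 - g * tanh (t * (d₁ + d₂)) / t * x
      - funA d₁ d₂ γ₁ 0 t * (g * tanh (t * d₂) / t) := by
  rw [phi, funB_gamma2_zero, funC_gamma2_zero ht hd]
  ring

lemma tendsto_mul_funA_gamma2_zero (hd₁ : 0 < d₁) (hd₂ : 0 < d₂) :
    Tendsto (fun t => t * funA d₁ d₂ γ₁ 0 t) atTop (𝓝 (-γ₁ / 2)) := by
  have h₁ := tendsto_tanh_mul_atTop hd₁
  have h := (h₁.div (tendsto_const_nhds (x := (1 : ℝ)) |>.add (h₁.mul (tendsto_tanh_mul_atTop hd₂)))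
    (by norm_num)).const_mul (-γ₁)
  rw [show -γ₁ * (1 / (1 + 1 * 1)) = -γ₁ / 2 by ring] at h
  refine h.congr' ?_
  filter_upwards [eventually_ne_atTop 0] with t ht
  rw [funA_gamma2_zero, Pi.div_apply]
  field_simp

lemma tendsto_mul_funB_gamma2_zero (hd : 0 < d₁ + d₂) :
    Tendsto (fun t => t * funB d₁ d₂ g γ₁ 0 t) atTop (𝓝 (-g)) := by
  have h := ((tendsto_tanh_mul_atTop hd).const_mul g).neg
  rw [mul_one] at h
  refine h.congr' ?_
  filter_upwards [eventually_ne_atTop 0] with t ht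
  rw [funB_gamma2_zero]
  field_simp

lemma tendsto_sq_mul_funC_gamma2_zero (hd₁ : 0 < d₁) (hd₂ : 0 < d₂) :
    Tendsto (fun t => t ^ 2 * funC d₁ d₂ g γ₁ 0 t) atTop (𝓝 (γ₁ * g / 2)) := by
  have h := (tendsto_mul_funA_gamma2_zero (γ₁ := γ₁) hd₁ hd₂).mul
    ((tendsto_tanh_mul_atTop hd₂).const_mul g).neg
  rw [show -γ₁ / 2 * -(g * 1) = γ₁ * g / 2 by ring] at h
  refine h.congr' ?_
  filter_upwards [eventually_ne_atTop 0] with t ht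
  rw [funC_gamma2_zero ht (by positivity)]
  field_simp

end GammaTwoZero

lemma exists_pos_forall_ge_of_eventually_exists {α : Type*} [Nonempty α] {P : ℝ → α → Prop}
    (h : ∀ᶠ t in atTop, ∃ x, P t x) : ∃ t₀ > 0, ∃ f : ℝ → α, ∀ t ≥ t₀, P t (f t) := by
  obtain ⟨t₀, ht₀⟩ := eventually_atTop.1 (h.and (eventually_gt_atTop 0))
  choose! f hf using fun t ht => (ht₀ t ht).1
  exact ⟨t₀, (ht₀ t₀ le_rfl).2, f, hf⟩

lemma tendsto_sqrt_mul_tanh_div_atTop {c d : ℝ} (hd : 0 < d) :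
    Tendsto (fun t => √(c * tanh (t * d) / t)) atTop (𝓝 0) := by
  simpa [div_eq_mul_inv] using
    (((tendsto_tanh_mul_atTop hd).const_mul c).mul tendsto_inv_atTop_zero).sqrt

lemma eventually_exists_roots_gamma2_zero {d₁ d₂ g γ₁ : ℝ} (hd₁ : 0 < d₁) (hd₂ : 0 < d₂)
    (hg : 0 < g) (hγ₁ : γ₁ < 0) :
    ∀ᶠ t in atTop, ∃ Λ : ℝ × ℝ × ℝ,
      (γ₁ * d₁ < Λ.2.2 ∧ Λ.2.2 < Λ.2.1 ∧ Λ.2.1 < 0 ∧ 0 < Λ.1 ∧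
        ∀ x, phi d₁ d₂ g γ₁ 0 t x = (x - Λ.1) * (x - Λ.2.1) * (x - Λ.2.2)) ∧
      -(2 * √(g * tanh (t * (d₁ + d₂)) / t)) < Λ.2.2 ∧
      Λ.1 < 2 * √(g * tanh (t * (d₁ + d₂)) / t) := by
  have hd : 0 < d₁ + d₂ := add_pos hd₁ hd₂
  have hβ : Tendsto (fun t => t * -funB d₁ d₂ g γ₁ 0 t) atTop (𝓝 g) := by
    simpa using (tendsto_mul_funB_gamma2_zero (g := g) (γ₁ := γ₁) hd).neg
  have hs := ((tendsto_sqrt_mul_tanh_div_atTop (c := g) hd).const_mul 2).neg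
  rw [mul_zero, neg_zero] at hs
  filter_upwards [eventually_gt_atTop 0, hs.eventually_const_lt (mul_neg_of_neg_of_pos hγ₁ hd₁),
    eventually_const_mul_sq_lt (tendsto_mul_funA_gamma2_zero (γ₁ := γ₁) hd₁ hd₂) hβ hg (4 / 9)]
    with t ht hroot hAβ
  rw [funB_gamma2_zero, neg_neg] at hAβ
  have hT₁ := tanh_pos (mul_pos ht hd₁)
  have hT₂ := tanh_pos (mul_pos ht hd₂)
  have hA : 0 < funA d₁ d₂ γ₁ 0 t := by
    rw [funA_gamma2_zero]
    exact mul_pos (div_pos (neg_pos.2 hγ₁) ht) (div_pos hT₁ (by positivity))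
  have hγβ : g * tanh (t * d₂) / t < g * tanh (t * (d₁ + d₂)) / t :=
    div_lt_div_of_pos_right (mul_lt_mul_of_pos_left (strictMono_tanh (by nlinarith)) hg) ht
  obtain ⟨Λ₁, Λ₂, Λ₃, h₃, h₃₂, h₂, h₁, h₁', hfactor⟩ :=
    exists_three_roots_cubic hA (div_pos (mul_pos hg hT₂) ht) hγβ (by linarith)
  exact ⟨(Λ₁, Λ₂, Λ₃), ⟨by linarith, h₃₂, h₂, h₁,
    fun x => by rw [phi_gamma2_zero ht.ne' hd.ne', hfactor]⟩, h₃, h₁'⟩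

/-- the case `γ₂ = 0`, `γ₁ < 0`: `t³Δ(t) → −g³/27`, `Δ` is
eventually negative, and the dispersion cubic has three distinct real roots
with `γ₁d₁ < Λ₃ < Λ₂ < 0 < Λ₁`, all converging to `0`. -/
theorem discriminant_and_roots_gamma2_zero
    (d₁ d₂ g γ₁ : ℝ) (hd₁ : 0 < d₁) (hd₂ : 0 < d₂) (hg : 0 < g) (hγ₁ : γ₁ < 0) :
    Tendsto (fun t : ℝ => t ^ 3 * disc d₁ d₂ g γ₁ 0 t) atTop (nhds (-(g ^ 3) / 27)) ∧
    (∀ᶠ t in atTop, disc d₁ d₂ g γ₁ 0 t < 0) ∧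
    ∃ t₀ > (0 : ℝ), ∃ Λ₁ Λ₂ Λ₃ : ℝ → ℝ,
      (∀ t ≥ t₀,
        γ₁ * d₁ < Λ₃ t ∧ Λ₃ t < Λ₂ t ∧ Λ₂ t < 0 ∧ 0 < Λ₁ t ∧
        ∀ Λ : ℝ, phi d₁ d₂ g γ₁ 0 t Λ = (Λ - Λ₁ t) * (Λ - Λ₂ t) * (Λ - Λ₃ t)) ∧
      Tendsto Λ₁ atTop (nhds 0) ∧
      Tendsto Λ₂ atTop (nhds 0) ∧
      Tendsto Λ₃ atTop (nhds 0) := by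
  have hd : 0 < d₁ + d₂ := add_pos hd₁ hd₂
  have hΔ : Tendsto (fun t => t ^ 3 * disc d₁ d₂ g γ₁ 0 t) atTop (𝓝 (-(g ^ 3) / 27)) := by
    have h := tendsto_pow_three_mul_discriminant (tendsto_mul_funA_gamma2_zero (γ₁ := γ₁) hd₁ hd₂)
      (tendsto_mul_funB_gamma2_zero (g := g) (γ₁ := γ₁) hd)
      (tendsto_sq_mul_funC_gamma2_zero (g := g) (γ₁ := γ₁) hd₁ hd₂)
    rwa [show (-g / 3) ^ 3 = -(g ^ 3) / 27 by ring] at h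
  refine ⟨hΔ, ?_, ?_⟩
  · have hlim_neg : -(g ^ 3) / 27 < 0 :=
      div_neg_of_neg_of_pos (neg_neg_of_pos (pow_pos hg 3)) (by norm_num)
    filter_upwards [hΔ.eventually_lt_const hlim_neg, eventually_gt_atTop 0] with t hneg ht
    exact neg_of_mul_neg_right hneg (pow_pos ht 3).le
  obtain ⟨t₀, ht₀, Λ, hΛ⟩ :=
    exists_pos_forall_ge_of_eventually_exists (eventually_exists_roots_gamma2_zero hd₁ hd₂ hg hγ₁)
  have hs := (tendsto_sqrt_mul_tanh_div_atTop (c := g) hd).const_mul 2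
  rw [mul_zero] at hs
  have hlim (f : ℝ → ℝ) (hf : ∀ t ≥ t₀, |f t| ≤ 2 * √(g * tanh (t * (d₁ + d₂)) / t)) :
      Tendsto f atTop (𝓝 0) :=
    squeeze_zero_norm' (eventually_atTop.2 ⟨t₀, hf⟩) hs
  refine ⟨t₀, ht₀, fun t => (Λ t).1, fun t => (Λ t).2.1, fun t => (Λ t).2.2,
    fun t ht => (hΛ t ht).1, hlim _ ?_, hlim _ ?_, hlim _ ?_⟩ <;>
  · intro t ht
    obtain ⟨⟨-, h₃₂, h₂, h₁, -⟩, h₃, h₁'⟩ := hΛ t ht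
    exact abs_le.2 ⟨by linarith, by linarith⟩
end
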